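/- Let T and S be ω1-trees, let C ⊆ ω1 be a club, and let g : T↾C → S↾C be an order isomorphism. Then g preserves heights: for every t ∈ T↾C, the height of g(t) in S equals the height of t in T. -/

import Mathlib

noncomputable section

/-- The first uncountable ordinal ω₁. -/
def omega1 : Ordinal := (Cardinal.aleph 1).ord

/-- `ht` is the height function of the partial order `T`: the strict predecessors of every
element are well-ordered, and `ht t` is the order type of the set of strict predecessors. -/
def HeightFun (T : Type) [PartialOrder T] (ht : T → Ordinal) : Prop :=
  ∀ t : T, ∃ w : IsWellOrder {s : T // s < t} (· < ·),
    ht t = @Ordinal.type {s : T // s < t} (· < ·) w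

/-- The α-th level of `T`: the set of elements of height α. -/
def Level {T : Type} [PartialOrder T] (ht : T → Ordinal) (α : Ordinal) : Set T :=
  {t | ht t = α}

/-- `T` is an ω₁-tree (with height function `ht`): it has cardinality ℵ₁, the strict
predecessors of every element are well-ordered with order type `ht t`, every element has
countable height, and every level `T_α` (α < ω₁) is countable and nonempty. -/
def IsOmega1Tree (T : Type) [PartialOrder T] (ht : T → Ordinal) : Prop :=
  HeightFun T ht ∧
  Cardinal.mk T = Cardinal.aleph 1 ∧
  (∀ t : T, ht t < omega1) ∧
  (∀ α : Ordinal, α < omega1 → (Level ht α).Countable ∧ (Level ht α).Nonempty)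

/-- A branch of `T` is a downward closed chain. -/
def IsBranch {T : Type} [PartialOrder T] (b : Set T) : Prop :=
  IsChain (· ≤ ·) b ∧ ∀ s t : T, t ∈ b → s ≤ t → s ∈ b

/-- A cofinal branch of `T` is a branch meeting every level `T_α`, α < ω₁. -/
def IsCofinalBranch {T : Type} [PartialOrder T] (ht : T → Ordinal) (b : Set T) : Prop :=
  IsBranch b ∧ ∀ α : Ordinal, α < omega1 → ∃ t ∈ b, ht t = α

/-- The set of cofinal branches of `T`. -/
def CofinalBranches (T : Type) [PartialOrder T] (ht : T → Ordinal) : Set (Set T) :=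
  {b | IsCofinalBranch ht b}

/-- The set of cofinal branches of `T` passing through `x`; this set is in natural bijection
with the set of cofinal branches of the cone `T_x`. -/
def BranchesThrough {T : Type} [PartialOrder T] (ht : T → Ordinal) (x : T) : Set (Set T) :=
  {b | IsCofinalBranch ht b ∧ x ∈ b}

/-- A Kurepa tree is an ω₁-tree with at least ℵ₂ cofinal branches. -/
def IsKurepaTree (T : Type) [PartialOrder T] (ht : T → Ordinal) : Prop :=
  IsOmega1Tree T ht ∧ Cardinal.aleph 2 ≤ Cardinal.mk ↥(CofinalBranches T ht)

/-- `T` is everywhere Kurepa: it is an ω₁-tree and for every `x ∈ T` the cone `T_x` has at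
least ℵ₂ cofinal branches, i.e. at least ℵ₂ cofinal branches of `T` pass through `x`. -/
def IsEverywhereKurepa (T : Type) [PartialOrder T] (ht : T → Ordinal) : Prop :=
  IsOmega1Tree T ht ∧ ∀ x : T, Cardinal.aleph 2 ≤ Cardinal.mk ↥(BranchesThrough ht x)

/-- `C` is a club (closed unbounded subset) of ω₁. -/
def IsClub' (C : Set Ordinal) : Prop :=
  (∀ α ∈ C, α < omega1) ∧
  (∀ α < omega1, ∃ β ∈ C, α ≤ β) ∧
  (∀ α < omega1, Order.IsSuccLimit α → (∀ β < α, ∃ γ ∈ C, β < γ ∧ γ < α) → α ∈ C)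

/-- `T↾A`: the set of elements of `T` whose height lies in `A`. -/
def Restrict (T : Type) [PartialOrder T] (ht : T → Ordinal) (A : Set Ordinal) : Set T :=
  {t | ht t ∈ A}

/-- `T` and `S` are club isomorphic: there is a club `C ⊆ ω₁` such that `T↾C` and `S↾C`
(with the induced orders) are order isomorphic. -/
def ClubIsomorphic (T : Type) [PartialOrder T] (htT : T → Ordinal)
    (S : Type) [PartialOrder S] (htS : S → Ordinal) : Prop :=
  ∃ C : Set Ordinal, IsClub C ∧
    Nonempty (↥(Restrict T htT C) ≃o ↥(Restrict S htS C))

/-!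
Along the predecessors of `t` the height map is an order isomorphism onto the ordinals below
`ht t`, so in `T↾C` it identifies the predecessors of `t` with the elements of `C` below `ht t`.
An isomorphism `g : T↾C ≃o S↾C` carries the predecessors of `t` onto those of `g t`, hence the
initial segments of the well-order `C` below `htT t` and below `htS (g t)` are isomorphic, and
these two elements of `C` coincide.
-/

protected def OrderIso.Iio {α β : Type*} [Preorder α] [Preorder β] (e : α ≃o β) (a : α) :
    Set.Iio a ≃o Set.Iio (e a) where
  toEquiv := e.toEquiv.subtypeEquiv fun _ => e.lt_iff_lt.symm
  map_rel_iff' := e.le_iff_le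

theorem eq_of_orderIso_Iio {α : Type*} [LinearOrder α] [WellFoundedLT α] {a b : α}
    (e : Set.Iio a ≃o Set.Iio b) : a = b := by
  apply Ordinal.typein_injective (α := α) (· < ·)
  rw [← Ordinal.type_Iio_lt, ← Ordinal.type_Iio_lt]
  exact e.toRelIsoLT.ordinalType_congr

namespace HeightFun

variable {T : Type} [PartialOrder T] {ht : T → Ordinal}

theorem eq_typein (h : HeightFun T ht) {t : T} [IsWellOrder (Set.Iio t) (· < ·)]
    (s : Set.Iio t) : ht s = Ordinal.typein (· < ·) s := by
  obtain ⟨w, hw⟩ := h s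
  rw [hw, ← Ordinal.type_subrel]
  exact RelIso.ordinalType_congr
    { toFun := fun r => ⟨⟨r, r.2.trans s.2⟩, r.2⟩
      invFun := fun r => ⟨r.1, r.2⟩
      map_rel_iff' := Iff.rfl }

def predOrderIso (h : HeightFun T ht) (t : T) : Set.Iio t ≃o Set.Iio (ht t) :=
  letI : IsWellOrder (Set.Iio t) (· < ·) := (h t).choose
  (PrincipalSeg.orderIsoIio (Ordinal.typein (α := Set.Iio t) (· < ·))).trans
    (OrderIso.setCongr _ _ (by rw [Ordinal.top_typein, (h t).choose_spec]; rfl))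

@[simp]
theorem predOrderIso_apply (h : HeightFun T ht) {t : T} (s : Set.Iio t) :
    (h.predOrderIso t s : Ordinal) = ht s := by
  let : IsWellOrder (Set.Iio t) (· < ·) := (h t).choose
  exact (h.eq_typein s).symm

theorem ht_lt_ht (h : HeightFun T ht) {s t : T} (hst : s < t) : ht s < ht t := by
  simpa using (h.predOrderIso t ⟨s, hst⟩).2

theorem ht_le_ht_iff (h : HeightFun T ht) {s₁ s₂ t : T} (h₁ : s₁ < t) (h₂ : s₂ < t) :
    ht s₁ ≤ ht s₂ ↔ s₁ ≤ s₂ := by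
  have := (h.predOrderIso t).le_iff_le (x := ⟨s₁, h₁⟩) (y := ⟨s₂, h₂⟩)
  rwa [← Subtype.coe_le_coe, predOrderIso_apply, predOrderIso_apply] at this

theorem exists_lt_ht_eq (h : HeightFun T ht) {t : T} {β : Ordinal} (hβ : β < ht t) :
    ∃ s < t, ht s = β := by
  obtain ⟨s, hs⟩ := (h.predOrderIso t).surjective ⟨β, hβ⟩
  exact ⟨s, s.2, by simpa using congrArg Subtype.val hs⟩

def restrictIioOrderIso (h : HeightFun T ht) {C : Set Ordinal} (t : Restrict T ht C) :
    Set.Iio t ≃o Set.Iio (⟨ht t, t.2⟩ : C) :=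
  .ofSurjective
    (.ofMapLEIff (fun s => ⟨⟨ht s, s.1.2⟩, h.ht_lt_ht s.2⟩)
      fun s₁ s₂ => h.ht_le_ht_iff s₁.2 s₂.2)
    fun β => by
      obtain ⟨s, hst, hs⟩ := h.exists_lt_ht_eq β.2
      exact ⟨⟨⟨s, show ht s ∈ C from hs ▸ β.1.2⟩, hst⟩, by ext; exact hs⟩

end HeightFun

theorem club_restriction_iso_preserves_height_general
    (T : Type) [PartialOrder T] (htT : T → Ordinal)
    (S : Type) [PartialOrder S] (htS : S → Ordinal)
    (hT : IsOmega1Tree T htT) (hS : IsOmega1Tree S htS)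
    (C : Set Ordinal)
    (g : ↥(Restrict T htT C) ≃o ↥(Restrict S htS C)) :
    ∀ t : ↥(Restrict T htT C), htS ↑(g t) = htT ↑t := by
  intro t
  have e : Set.Iio (⟨htT t, t.2⟩ : C) ≃o Set.Iio (⟨htS (g t), (g t).2⟩ : C) :=
    ((hT.1.restrictIioOrderIso t).symm.trans (g.Iio t)).trans (hS.1.restrictIioOrderIso (g t))
  exact congrArg Subtype.val (eq_of_orderIso_Iio e).symm

/-- an order isomorphism `g : T↾C → S↾C` between restrictions of ω₁-trees to a
club `C` preserves heights: the height in `S` of `g t` equals the height in `T` of `t`. -/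
theorem club_restriction_iso_preserves_height
    (T : Type) [PartialOrder T] (htT : T → Ordinal)
    (S : Type) [PartialOrder S] (htS : S → Ordinal)
    (hT : IsOmega1Tree T htT) (hS : IsOmega1Tree S htS)
    (C : Set Ordinal) (hC : IsClub' C)
    (g : ↥(Restrict T htT C) ≃o ↥(Restrict S htS C)) :
    ∀ t : ↥(Restrict T htT C), htS ↑(g t) = htT ↑t :=
  club_restriction_iso_preserves_height_general T htT S htS hT hS C g
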